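/- arXiv:2306.12196 — 3 statements merged into one kernel-verified Lean document; each statement's English description precedes it below -/
import Mathlib

section
/- Let M ∈ GL(n, F_2), let 1 ≤ i_1 < ... < i_k ≤ n, let u_1,...,u_k be the columns of M in positions i_1,...,i_k, and let u_0 ∈ F_2^n. Then the ANF coefficient of x_{i_1}···x_{i_k} in the function g(x) = f(Mx ⊕ u_0) equals ⊕_{c_1,...,c_k ∈ F_2} f((⊕_{j=1}^k c_j u_j) ⊕ u_0). -/
open Finset

def testSum (n k : ℕ) (f : (Fin n → ZMod 2) → ZMod 2)
    (u0 : Fin n → ZMod 2) (u : Fin k → Fin n → ZMod 2) : ZMod 2 :=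
  ∑ c : Fin k → ZMod 2, f (u0 + ∑ i, c i • u i)

noncomputable def dt (n k : ℕ) (f : (Fin n → ZMod 2) → ZMod 2) : ℝ :=
  ((univ.filter (fun p : (Fin n → ZMod 2) × (Fin k → Fin n → ZMod 2) =>
      testSum n k f p.1 p.2 ≠ 0)).card : ℝ) / 2 ^ ((k + 1) * n)

def anf (n : ℕ) (f : (Fin n → ZMod 2) → ZMod 2) (a : Fin n → ZMod 2) : ZMod 2 :=
  ∑ x ∈ univ.filter (fun x : Fin n → ZMod 2 => ∀ i, (x i).val ≤ (a i).val), f x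

def wt (n : ℕ) (a : Fin n → ZMod 2) : ℕ := (univ.filter fun i => a i = 1).card

def degree (n : ℕ) (f : (Fin n → ZMod 2) → ZMod 2) : ℕ :=
  (univ.filter fun a => anf n f a ≠ 0).sup (wt n)

def monom (n : ℕ) (a : Fin n → ZMod 2) (x : Fin n → ZMod 2) : ZMod 2 :=
  ∏ i ∈ univ.filter (fun i => a i = 1), x i

/-! Binary Möbius inversion recovers an ANF coefficient as `b a = ∑_{x ≤ a} g x`. For `a` the
indicator of `{i₁, …, i_k}`, the vectors `x ≤ a` are exactly those supported on these coordinates,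
i.e. `x = ∑ⱼ cⱼ e_{iⱼ}` with `c ∈ 𝔽₂ᵏ`, and then `M x = ∑ⱼ cⱼ uⱼ`. -/

lemma zmod_two_val_le_val_iff (z w : ZMod 2) : z.val ≤ w.val ↔ (w = 0 → z = 0) := by
  revert z w; decide

section Inversion

variable {n : ℕ}

lemma filter_val_le_eq_piFinset (a : Fin n → ZMod 2) :
    univ.filter (fun x : Fin n → ZMod 2 => ∀ i, (x i).val ≤ (a i).val) =
      Fintype.piFinset (fun i => if a i = 1 then univ else {0}) := by
  ext x
  simp only [mem_filter, mem_univ, true_and, Fintype.mem_piFinset, zmod_two_val_le_val_iff]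
  refine forall_congr' fun i => ?_
  generalize a i = s
  generalize x i = t
  revert s t
  decide

lemma sum_filter_val_le_monom (a a' : Fin n → ZMod 2) :
    ∑ x ∈ univ.filter (fun x : Fin n → ZMod 2 => ∀ i, (x i).val ≤ (a i).val), monom n a' x =
      if a' = a then 1 else 0 := by
  have factor (s t : ZMod 2) :
      ∑ y ∈ (if t = 1 then (univ : Finset (ZMod 2)) else {0}), (if s = 1 then y else 1) =
        if s = t then 1 else 0 := by
    revert s t; decide
  simp only [filter_val_le_eq_piFinset, monom, prod_filter]
  rw [← prod_univ_sum _ fun i y => if a' i = 1 then y else 1,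
    prod_congr rfl fun i _ => factor (a' i) (a i), prod_boole]
  simp [funext_iff]

lemma eq_anf_of_eq_sum_monom {g b : (Fin n → ZMod 2) → ZMod 2}
    (hb : ∀ x, g x = ∑ a, b a * monom n a x) (a : Fin n → ZMod 2) : b a = anf n g a := by
  simp only [anf, hb, sum_comm (s := univ.filter _), ← mul_sum, sum_filter_val_le_monom,
    mul_ite, mul_one, mul_zero, sum_ite_eq', mem_univ, if_true]

end Inversion

lemma filter_val_le_indicator_eq_image {k n : ℕ} {i : Fin k → Fin n}
    (hi : Function.Injective i) :
    univ.filter (fun x : Fin n → ZMod 2 =>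
        ∀ p, (x p).val ≤ (if ∃ j, i j = p then (1 : ZMod 2) else 0).val) =
      univ.image (fun c => Function.extend i c 0) := by
  ext x
  simp only [mem_filter, mem_univ, true_and, mem_image, zmod_two_val_le_val_iff,
    ite_eq_right_iff, one_ne_zero, imp_false]
  constructor
  · intro hx
    refine ⟨x ∘ i, funext fun p => ?_⟩
    by_cases hp : ∃ j, i j = p
    · obtain ⟨j, rfl⟩ := hp
      exact hi.extend_apply _ _ j
    · rw [Function.extend_apply' _ _ _ hp, hx p hp, Pi.zero_apply]
  · rintro ⟨c, rfl⟩ p hp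
    exact Function.extend_apply' _ _ _ hp

lemma mulVec_extend_zero {ι σ m R : Type*} [Fintype ι] [Fintype σ] [CommSemiring R]
    {i : ι → σ} (hi : Function.Injective i) (M : Matrix m σ R) (c : ι → R) :
    M.mulVec (Function.extend i c 0) = ∑ j, c j • M.col (i j) := by
  ext r
  simp only [Matrix.mulVec, dotProduct, Finset.sum_apply, Pi.smul_apply, Matrix.col_apply,
    smul_eq_mul]
  symm
  refine Fintype.sum_of_injective i hi _ _ (fun p hp => ?_) (fun j => ?_)
  · rw [Function.extend_apply' _ _ _ hp, Pi.zero_apply, mul_zero]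
  · rw [hi.extend_apply, mul_comm]

theorem anf_coeff_comp_affine_general (n k : ℕ) (f : (Fin n → ZMod 2) → ZMod 2)
    (M : Matrix (Fin n) (Fin n) (ZMod 2))
    (i : Fin k → Fin n) (hi : StrictMono i) (u0 : Fin n → ZMod 2)
    (b : (Fin n → ZMod 2) → ZMod 2)
    (hb : ∀ x, f (M.mulVec x + u0) = ∑ a : Fin n → ZMod 2, b a * monom n a x) :
    b (fun p => if ∃ j, i j = p then 1 else 0)
      = testSum n k f u0 (fun j r => M r (i j)) := by
  rw [eq_anf_of_eq_sum_monom hb, anf, filter_val_le_indicator_eq_image hi.injective,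
    sum_image fun c _ d _ h => Function.extend_injective hi.injective 0 h, testSum]
  refine sum_congr rfl fun c _ => ?_
  rw [mulVec_extend_zero hi.injective, add_comm]
  rfl

theorem anf_coeff_comp_affine (n k : ℕ) (f : (Fin n → ZMod 2) → ZMod 2)
    (M : Matrix (Fin n) (Fin n) (ZMod 2)) (hM : IsUnit M.det)
    (i : Fin k → Fin n) (hi : StrictMono i) (u0 : Fin n → ZMod 2)
    (b : (Fin n → ZMod 2) → ZMod 2)
    (hb : ∀ x, f (M.mulVec x + u0) = ∑ a : Fin n → ZMod 2, b a * monom n a x) :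
    b (fun p => if ∃ j, i j = p then 1 else 0)
      = testSum n k f u0 (fun j r => M r (i j)) :=
  anf_coeff_comp_affine_general n k f M i hi u0 b hb
end

section
/- For k ≥ 1, dt_k(x_1 x_2 ··· x_k) = ∏_{i=1}^k (1 − 1/2^i), where the function is the single monomial x_1···x_k viewed as a Boolean function on F_2^n with n ≥ k. -/
/-!
On the first `k` coordinates the test sum of `x₁ ⋯ xₖ` at `(u₀, u)` is
`∑_c ∏_j (a + ∑_i cᵢ vᵢ)_j`, where `a` and the `vᵢ` are the restrictions of `u₀` and the `uᵢ`.
If the `vᵢ` are linearly independent, `c ↦ a + ∑ cᵢ vᵢ` is a bijection of `𝔽₂ᵏ`, and the sum only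
sees the all-ones vector, giving `1`; otherwise the summand has a nonzero period and the terms
cancel in pairs. So `dt_k` is the probability that `k` uniform vectors of `𝔽₂ᵏ` form a basis, i.e.
`∏_{i<k} (2ᵏ - 2ⁱ) / 2^{k²} = ∏_{i=1}^k (1 - 2⁻ⁱ)`.
-/

open Finset

theorem sum_eq_zero_of_add_period {G R : Type*} [AddGroup G] [Fintype G] [Ring R] [CharP R 2]
    (g : G → R) {t : G} (ht : t ≠ 0) (ht₂ : t + t = 0) (hg : ∀ x, g (x + t) = g x) :
    ∑ x, g x = 0 :=
  sum_ninvolution (· + t) (fun x => by rw [hg, CharTwo.add_self_eq_zero])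
    (fun x _ => by simpa using ht) (fun _ => mem_univ _)
    (fun x => by rw [add_assoc, ht₂, add_zero])

theorem card_filter_map_mem_mul_card {G H : Type*} [AddGroup G] [Fintype G] [AddGroup H]
    [Fintype H] [DecidableEq H] (φ : G →+ H) (hφ : Function.Surjective φ) (s : Finset H) :
    #{x | φ x ∈ s} * Fintype.card H = #s * Fintype.card G := by
  have hfiber : ∀ h, #{x | φ x = h} = #{x | φ x = 0} := fun h =>
    AddMonoidHom.card_fiber_eq_of_mem_range φ (hφ h) (hφ 0)
  have hcount : ∀ s : Finset H, #{x | φ x ∈ s} = #s * #{x | φ x = 0} := fun s => by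
    rw [← sum_card_fiberwise_eq_card_filter, sum_const_nat fun h _ => hfiber h]
  have hG : Fintype.card G = Fintype.card H * #{x | φ x = 0} := by simpa using hcount univ
  rw [hcount, hG]
  ring

theorem testSum_comp_linearMap {n m k : ℕ} (g : (Fin m → ZMod 2) → ZMod 2)
    (π : (Fin n → ZMod 2) →ₗ[ZMod 2] (Fin m → ZMod 2)) (u₀ : Fin n → ZMod 2)
    (u : Fin k → Fin n → ZMod 2) :
    testSum n k (g ∘ π) u₀ u = testSum m k g (π u₀) (π ∘ u) := by
  simp [testSum]

theorem sum_prod_eq_one (ι : Type*) [Fintype ι] [DecidableEq ι] :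
    ∑ y : ι → ZMod 2, ∏ j, y j = 1 := by
  rw [← Fintype.prod_sum (fun (_ : ι) (t : ZMod 2) => t)]
  simp [show ∑ t : ZMod 2, t = 1 from rfl]

theorem testSum_prod_ne_zero_iff {k : ℕ} (a : Fin k → ZMod 2) (v : Fin k → Fin k → ZMod 2) :
    testSum k k (fun y => ∏ j, y j) a v ≠ 0 ↔ LinearIndependent (ZMod 2) v := by
  set L := Fintype.linearCombination (ZMod 2) v
  have hL : ∀ c, ∑ i, c i • v i = L c := fun c => (Fintype.linearCombination_apply _ _ _).symm
  simp only [testSum, hL, linearIndependent_iff_injective_fintypeLinearCombination]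
  constructor
  · intro hsum
    by_contra hinj
    obtain ⟨t, hLt, ht⟩ : ∃ t, L t = 0 ∧ t ≠ 0 := by
      simpa [injective_iff_map_eq_zero] using hinj
    refine hsum (sum_eq_zero_of_add_period _ ht (funext fun i => CharTwo.add_self_eq_zero (t i))
      fun c => ?_)
    rw [map_add, hLt, add_zero]
  · intro hinj
    have hbij : Function.Bijective fun c => a + L c :=
      (add_right_injective a).comp hinj |> Finite.injective_iff_bijective.mp
    rw [Fintype.sum_bijective _ hbij _ (fun y => ∏ j, y j) fun _ => rfl, sum_prod_eq_one (Fin k)]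
    exact one_ne_zero

open Classical in
theorem card_filter_linearIndependent {K : Type*} [Field K] [Fintype K]
    {k m : ℕ} (hkm : k ≤ m) :
    #{v : Fin k → Fin m → K | LinearIndependent K v} =
      ∏ i : Fin k, (Fintype.card K ^ m - Fintype.card K ^ (i : ℕ)) := by
  rw [← Fintype.card_subtype, ← Nat.card_eq_fintype_card, card_linearIndependent] <;> simp [hkm]

theorem prod_pow_sub_pow_eq {K : Type*} [Field K] {q : K} (hq : q ≠ 0) (k : ℕ) :
    ∏ i ∈ range k, (q ^ k - q ^ i) = q ^ (k * k) * ∏ i ∈ Icc 1 k, (1 - 1 / q ^ i) := by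
  have hfactor : ∀ i ∈ range k, q ^ k - q ^ i = q ^ k * (1 - 1 / q ^ (k - i)) := fun i hi => by
    rw [← pow_sub_mul_pow q (mem_range.mp hi).le]
    field_simp
  rw [prod_congr rfl hfactor, prod_mul_distrib, prod_const, card_range, ← pow_mul]
  congr 1
  refine prod_nbij' (k - ·) (k - ·) ?_ ?_ ?_ ?_ fun i hi => rfl <;> intro i hi <;>
    simp only [mem_range, mem_Icc] at hi ⊢ <;> omega

open Classical in
theorem card_filter_linearIndependent_funLeft_comp_mul {K : Type*} [Field K] [Fintype K]
    {k m n : ℕ} (hkm : k ≤ m) {e : Fin m → Fin n} (he : Function.Injective e) :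
    #{u : Fin k → Fin n → K | LinearIndependent K (LinearMap.funLeft K K e ∘ u)}
        * Fintype.card K ^ (k * m)
      = (∏ i : Fin k, (Fintype.card K ^ m - Fintype.card K ^ (i : ℕ)))
        * Fintype.card K ^ (k * n) := by
  set φ := (LinearMap.funLeft K K e).compLeft (Fin k)
  have key := card_filter_map_mem_mul_card φ.toAddMonoidHom he.surjective_comp_right.comp_left
    (univ.filter fun v : Fin k → Fin m → K => LinearIndependent K v)
  simp only [mem_filter, mem_univ, true_and, Fintype.card_fun, Fintype.card_fin,
    card_filter_linearIndependent hkm, ← pow_mul, mul_comm _ k] at key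
  exact key

theorem dt_single_monomial_general (n k : ℕ) (hkn : k ≤ n) :
    dt n k (fun x => ∏ j : Fin k, x (Fin.castLE hkn j))
      = ∏ i ∈ Icc 1 k, (1 - 1 / 2 ^ i : ℝ) := by
  classical
  set π := LinearMap.funLeft (ZMod 2) (ZMod 2) (Fin.castLE hkn)
  set N := #{u : Fin k → Fin n → ZMod 2 | LinearIndependent (ZMod 2) (π ∘ u)}
  have hsupport : (univ.filter fun p : (Fin n → ZMod 2) × (Fin k → Fin n → ZMod 2) =>
      testSum n k (fun x => ∏ j : Fin k, x (Fin.castLE hkn j)) p.1 p.2 ≠ 0)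
      = univ ×ˢ univ.filter fun u => LinearIndependent (ZMod 2) (π ∘ u) := by
    ext p
    simp only [mem_filter, mem_univ, true_and, mem_product]
    exact testSum_comp_linearMap (fun y => ∏ j, y j) π p.1 p.2 ▸ testSum_prod_ne_zero_iff _ _
  have hN : (N : ℝ) = (∏ i ∈ Icc 1 k, (1 - 1 / 2 ^ i : ℝ)) * 2 ^ (k * n) := by
    have hcount := congrArg (Nat.cast (R := ℝ))
      (card_filter_linearIndependent_funLeft_comp_mul (K := ZMod 2) le_rfl
        (Fin.castLE_injective hkn))
    have hle (i : Fin k) : 2 ^ (i : ℕ) ≤ 2 ^ k := Nat.pow_le_pow_right two_pos i.is_lt.le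
    rw [ZMod.card] at hcount
    push_cast [Nat.cast_sub (hle _)] at hcount
    rw [Fin.prod_univ_eq_prod_range (fun i => (2 : ℝ) ^ k - 2 ^ i),
      prod_pow_sub_pow_eq two_ne_zero] at hcount
    exact mul_right_cancel₀ (pow_ne_zero _ two_ne_zero) (hcount.trans (by ring))
  rw [dt, hsupport, card_product, card_univ, Fintype.card_fun, ZMod.card, Fintype.card_fin,
    Nat.cast_mul, hN, add_mul, one_mul, pow_add]
  push_cast
  field_simp

theorem dt_single_monomial (n k : ℕ) (hk : 1 ≤ k) (hkn : k ≤ n) :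
    dt n k (fun x => ∏ j : Fin k, x (Fin.castLE hkn j))
      = ∏ i ∈ Icc 1 k, (1 - 1 / 2 ^ i : ℝ) :=
  dt_single_monomial_general n k hkn
end

section
/- Let f : F_2^n → F_2 have degree k ≥ 1. Then ∏_{i=1}^k (1 − 1/2^i) ≤ dt_k(f) ≤ (1/2)·(1 − 1/2^n)^{k−1}. -/
open Finset

/-!
If `degree n f ≤ k`, every cube sum of `f` of dimension `> k` vanishes: restricted to an affine
cube, `f` is a polynomial of degree `≤ k` in the cube coordinates, and over `𝔽₂^m` such a
polynomial sums to zero when `k < m` (Chevalley–Warning). Hence `testSum n k f u₀ u` does not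
depend on `u₀`, and `u ↦ testSum n k f 0 u` is an alternating `k`-linear form `T`; it is nonzero
when `degree n f = k`, since on unit vectors it returns an ANF coefficient of top weight.

So `dt n k f` is the proportion of `u` with `T u ≠ 0`, counted one vector at a time through
`curryLeft`. For a nonzero form the first vector must avoid `ker T.curryLeft`, which has
codimension at least `k`; this gives the lower bound. For the upper bound every vector but the
last must be nonzero, and the last one must avoid the kernel of a linear functional.
-/

lemma sum_ite_le_mul_ite_le_zmod_two : ∀ y x : ZMod 2,
    ∑ z : ZMod 2, (if y.val ≤ z.val then 1 else 0) * (if z.val ≤ x.val then 1 else 0)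
      = if y = x then (1 : ZMod 2) else 0 := by
  decide

lemma monom_eq_prod_ite (n : ℕ) (a x : Fin n → ZMod 2) :
    monom n a x = ∏ i, if (a i).val ≤ (x i).val then 1 else 0 := by
  rw [monom, prod_filter]
  refine prod_congr rfl fun i _ => ?_
  generalize a i = s; generalize x i = t
  revert s t; decide

lemma anf_eq_sum_prod_ite (n : ℕ) (f : (Fin n → ZMod 2) → ZMod 2) (a : Fin n → ZMod 2) :
    anf n f a = ∑ y, (∏ i, if (y i).val ≤ (a i).val then 1 else 0) * f y := by
  simp only [anf, sum_filter, prod_boole, mem_univ, true_implies, ite_mul, one_mul, zero_mul]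

theorem sum_anf_mul_monom (n : ℕ) (f : (Fin n → ZMod 2) → ZMod 2) (x : Fin n → ZMod 2) :
    ∑ a, anf n f a * monom n a x = f x := by
  -- the interval `[y, x]` of the Boolean lattice has odd size only when `y = x`
  have interval : ∀ y : Fin n → ZMod 2, ∑ a : Fin n → ZMod 2,
      (∏ i, if (y i).val ≤ (a i).val then (1 : ZMod 2) else 0) *
        (∏ i, if (a i).val ≤ (x i).val then 1 else 0) = if y = x then 1 else 0 := by
    intro y
    simp_rw [← prod_mul_distrib]
    rw [← Fintype.prod_sum (κ := fun _ => ZMod 2) fun i z =>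
      (if (y i).val ≤ z.val then (1 : ZMod 2) else 0) * if z.val ≤ (x i).val then 1 else 0]
    simp_rw [sum_ite_le_mul_ite_le_zmod_two, prod_boole, mem_univ, true_implies, ← funext_iff]
  simp_rw [anf_eq_sum_prod_ite, monom_eq_prod_ite, sum_mul]
  rw [sum_comm]
  simp_rw [mul_right_comm _ (f _), ← sum_mul, interval]
  simp

lemma wt_le (n : ℕ) (a : Fin n → ZMod 2) : wt n a ≤ n :=
  (card_filter_le _ _).trans_eq (card_fin n)

lemma exists_anf_ne_zero_wt_eq_degree {n : ℕ} {f : (Fin n → ZMod 2) → ZMod 2}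
    (h : degree n f ≠ 0) : ∃ a, anf n f a ≠ 0 ∧ wt n a = degree n f := by
  have hne : (univ.filter fun a => anf n f a ≠ 0).Nonempty :=
    nonempty_iff_ne_empty.2 fun he => h (by rw [degree, he, sup_empty]; rfl)
  obtain ⟨a, ha, hsup⟩ := exists_mem_eq_sup _ hne (wt n)
  exact ⟨a, (mem_filter.1 ha).2, hsup.symm⟩

lemma wt_le_degree {n : ℕ} {f : (Fin n → ZMod 2) → ZMod 2} {a : Fin n → ZMod 2}
    (h : anf n f a ≠ 0) : wt n a ≤ degree n f :=
  le_sup (mem_filter.2 ⟨mem_univ _, h⟩)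

section AnfPolynomial

open MvPolynomial

lemma MvPolynomial.totalDegree_bind₁_le {σ τ R : Type*} [CommSemiring R] (p : MvPolynomial σ R)
    {g : σ → MvPolynomial τ R} (hg : ∀ i, (g i).totalDegree ≤ 1) :
    (bind₁ g p).totalDegree ≤ p.totalDegree := by
  conv_lhs => rw [p.as_sum]
  rw [map_sum]
  refine totalDegree_finsetSum_le fun d hd => ?_
  rw [bind₁_monomial]
  calc (C (p.coeff d) * ∏ i ∈ d.support, g i ^ d i).totalDegree
      ≤ (C (p.coeff d)).totalDegree + ∑ i ∈ d.support, (g i ^ d i).totalDegree :=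
        (totalDegree_mul _ _).trans (add_le_add_right (totalDegree_finsetProd _ _) _)
    _ ≤ 0 + ∑ i ∈ d.support, d i * 1 := by
        gcongr with i
        · exact (totalDegree_C _).le
        · exact (totalDegree_pow _ _).trans (Nat.mul_le_mul_left _ (hg i))
    _ ≤ p.totalDegree := by
        simpa [Finsupp.sum] using le_totalDegree hd

noncomputable def anfPoly (n : ℕ) (f : (Fin n → ZMod 2) → ZMod 2) :
    MvPolynomial (Fin n) (ZMod 2) :=
  ∑ a, C (anf n f a) * ∏ i ∈ univ.filter (fun i => a i = 1), X i

lemma eval_anfPoly (n : ℕ) (f : (Fin n → ZMod 2) → ZMod 2) (x : Fin n → ZMod 2) :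
    eval x (anfPoly n f) = f x := by
  simp only [anfPoly, map_sum, map_mul, map_prod, eval_C, eval_X]
  exact sum_anf_mul_monom n f x

lemma totalDegree_anfPoly_le (n : ℕ) (f : (Fin n → ZMod 2) → ZMod 2) :
    (anfPoly n f).totalDegree ≤ degree n f := by
  refine totalDegree_finsetSum_le fun a _ => ?_
  by_cases ha : anf n f a = 0
  · simp [ha]
  calc (C (anf n f a) * ∏ i ∈ univ.filter (fun i => a i = 1), X i).totalDegree
      ≤ (C (anf n f a)).totalDegree + ∑ i ∈ univ.filter (fun i => a i = 1),
          (X i : MvPolynomial (Fin n) (ZMod 2)).totalDegree :=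
        (totalDegree_mul _ _).trans (add_le_add_right (totalDegree_finsetProd _ _) _)
    _ = wt n a := by simp [wt, totalDegree_X]
    _ ≤ degree n f := wt_le_degree ha

theorem testSum_eq_zero_of_degree_lt {n k : ℕ} {f : (Fin n → ZMod 2) → ZMod 2}
    (h : degree n f < k) (u0 : Fin n → ZMod 2) (u : Fin k → Fin n → ZMod 2) :
    testSum n k f u0 u = 0 := by
  let L : Fin n → MvPolynomial (Fin k) (ZMod 2) := fun t => C (u0 t) + ∑ j, C (u j t) * X j
  have hL : ∀ t, (L t).totalDegree ≤ 1 := fun t =>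
    (totalDegree_add _ _).trans <| max_le ((totalDegree_C _).trans_le zero_le_one) <|
      totalDegree_finsetSum_le fun j _ => (totalDegree_mul _ _).trans (by simp [totalDegree_X])
  have hcube : ∀ c : Fin k → ZMod 2,
      f (u0 + ∑ i, c i • u i) = eval c (bind₁ L (anfPoly n f)) := by
    intro c
    rw [← aeval_eq_eval, aeval_bind₁, aeval_eq_eval, ← eval_anfPoly n f]
    refine congrArg (eval · (anfPoly n f)) (funext fun t => ?_)
    simp [L, mul_comm]
  simp only [testSum, hcube]
  refine sum_eval_eq_zero _ ?_
  calc (bind₁ L (anfPoly n f)).totalDegree ≤ degree n f :=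
        (totalDegree_bind₁_le _ hL).trans (totalDegree_anfPoly_le n f)
    _ < (Fintype.card (ZMod 2) - 1) * Fintype.card (Fin k) := by simpa using h

end AnfPolynomial

section testSum

variable {n : ℕ} {f : (Fin n → ZMod 2) → ZMod 2}

lemma testSum_succ {m : ℕ} (p : Fin (m + 1)) (x : Fin n → ZMod 2)
    (u : Fin (m + 1) → Fin n → ZMod 2) :
    testSum n (m + 1) f x u =
      testSum n m f x (p.removeNth u) + testSum n m f (x + u p) (p.removeNth u) := by
  rw [testSum, ← (Fin.insertNthEquiv (fun _ => ZMod 2) p).sum_comp, Fintype.sum_prod_type,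
    show ∀ g : ZMod 2 → ZMod 2, ∑ ε, g ε = g 0 + g 1 from Fin.sum_univ_two]
  simp [testSum, Fin.insertNthEquiv, Fin.sum_univ_succAbove _ p, Fin.removeNth_apply, add_assoc]

lemma testSum_eq_testSum_zero_add {m : ℕ} (x : Fin n → ZMod 2)
    (w : Fin m → Fin n → ZMod 2) :
    testSum n m f x w = testSum n m f 0 w + testSum n (m + 1) f 0 (Fin.cons x w) := by
  rw [testSum_succ 0, Fin.removeNth_zero, Fin.tail_cons, Fin.cons_zero, zero_add, ← add_assoc,
    CharTwo.add_self_eq_zero, zero_add]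

theorem testSum_eq_testSum_zero {k : ℕ} (hf : degree n f ≤ k) (x : Fin n → ZMod 2)
    (u : Fin k → Fin n → ZMod 2) : testSum n k f x u = testSum n k f 0 u := by
  rw [testSum_eq_testSum_zero_add x, testSum_eq_zero_of_degree_lt (k := k + 1) (by omega), add_zero]

lemma testSum_update_add {k : ℕ} (hf : degree n f ≤ k) (u : Fin k → Fin n → ZMod 2)
    (p : Fin k) (a b : Fin n → ZMod 2) :
    testSum n k f 0 (Function.update u p (a + b)) =
      testSum n k f 0 (Function.update u p a) + testSum n k f 0 (Function.update u p b) := by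
  obtain ⟨m, rfl⟩ := Nat.exists_eq_succ_of_ne_zero p.pos.ne'
  simp only [testSum_succ p, Function.update_self, Fin.removeNth_update, zero_add]
  -- additivity in slot `p` is the vanishing of the cube on `a`, `b` and the other directions
  have hcube := testSum_eq_zero_of_degree_lt (f := f) (k := m + 2) (by omega) 0
    (Fin.cons a (Fin.cons b (p.removeNth u)))
  simp only [testSum_succ 0, Fin.removeNth_zero, Fin.tail_cons, Fin.cons_zero, zero_add] at hcube
  grind

lemma testSum_update_zero {k : ℕ} (hf : degree n f ≤ k) (u : Fin k → Fin n → ZMod 2)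
    (p : Fin k) :
    testSum n k f 0 (Function.update u p 0) = 0 := by
  simpa using testSum_update_add hf u p 0 0

lemma testSum_eq_zero_of_eq {k : ℕ} (x : Fin n → ZMod 2) (u : Fin k → Fin n → ZMod 2)
    {i j : Fin k} (hij : i ≠ j) (h : u i = u j) : testSum n k f x u = 0 := by
  obtain ⟨m, rfl⟩ := Nat.exists_eq_succ_of_ne_zero i.pos.ne'
  obtain ⟨j, rfl⟩ := Fin.exists_succAbove_eq hij.symm
  obtain ⟨l, rfl⟩ := Nat.exists_eq_succ_of_ne_zero j.pos.ne'
  have hself : u i + u i = 0 := funext fun t => CharTwo.add_self_eq_zero (u i t)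
  rw [testSum_succ i, testSum_succ j, testSum_succ j, Fin.removeNth_apply, ← h, add_assoc x,
    hself, add_zero]
  grind

end testSum

def testSumForm {n k : ℕ} {f : (Fin n → ZMod 2) → ZMod 2} (hf : degree n f ≤ k) :
    (Fin n → ZMod 2) [⋀^Fin k]→ₗ[ZMod 2] ZMod 2 where
  toFun := testSum n k f 0
  map_update_add' u i a b := by convert testSum_update_add hf u i a b
  map_update_smul' u i c x := by
    obtain rfl | rfl : c = 0 ∨ c = 1 := by revert c; decide
    · rw [zero_smul, zero_smul]
      convert testSum_update_zero hf u i
    · rw [one_smul, one_smul]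
  map_eq_zero_of_eq' u _ _ h hij := testSum_eq_zero_of_eq 0 u hij h

lemma testSumForm_apply {n k : ℕ} {f : (Fin n → ZMod 2) → ZMod 2} (hf : degree n f ≤ k)
    (u : Fin k → Fin n → ZMod 2) : testSumForm hf u = testSum n k f 0 u :=
  rfl

lemma zmod_two_val_le_of_ne_one : ∀ z w : ZMod 2, (w ≠ 1 → z = 0) → z.val ≤ w.val := by
  decide

lemma zmod_two_eq_zero_of_val_le : ∀ z w : ZMod 2, w ≠ 1 → z.val ≤ w.val → z = 0 := by
  decide

/-- The cube spanned by the unit vectors in the support of `a` is the down-set of `a`. -/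
lemma exists_testSum_eq_anf {n k : ℕ} (f : (Fin n → ZMod 2) → ZMod 2) {a : Fin n → ZMod 2}
    (ha : wt n a = k) : ∃ u, testSum n k f 0 u = anf n f a := by
  subst ha
  let e : Fin (wt n a) ↪o Fin n := (univ.filter fun i => a i = 1).orderEmbOfFin rfl
  have he : ∀ t, a t = 1 ↔ t ∈ Set.range e := fun t => by
    rw [show Set.range e = _ from range_orderEmbOfFin _ _]; simp
  let φ : (Fin (wt n a) → ZMod 2) → Fin n → ZMod 2 := fun c t =>
    ∑ i, if t = e i then c i else 0
  have hφ : ∀ c, ∑ i, c i • (fun t => if t = e i then (1 : ZMod 2) else 0) = φ c :=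
    fun c => by ext t; simp [φ, Finset.sum_apply]
  have hφe : ∀ c i, φ c (e i) = c i := fun c i => by simp [φ, e.injective.eq_iff]
  have hφ0 : ∀ c t, a t ≠ 1 → φ c t = 0 := fun c t ht =>
    sum_eq_zero fun i _ => if_neg fun h => ht ((he t).2 ⟨i, h.symm⟩)
  refine ⟨fun i t => if t = e i then 1 else 0, ?_⟩
  simp only [testSum, anf, zero_add]
  refine sum_nbij' φ (fun x i => x (e i)) (fun c _ => ?_) (fun _ _ => mem_univ _)
    (fun c _ => funext (hφe c)) (fun x hx => funext fun t => ?_) fun c _ => congrArg f (hφ c)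
  · exact mem_filter.2 ⟨mem_univ _, fun t => zmod_two_val_le_of_ne_one _ _ (hφ0 c t)⟩
  · by_cases ht : a t = 1
    · obtain ⟨i, rfl⟩ := (he t).1 ht
      exact hφe _ i
    · rw [hφ0 _ t ht, zmod_two_eq_zero_of_val_le _ _ ht ((mem_filter.1 hx).2 t)]

lemma AlternatingMap.map_update_eq_zero_of_curryLeft_eq_zero {R M N : Type*} [CommRing R]
    [AddCommGroup M] [Module R M] [AddCommGroup N] [Module R N] {k : ℕ}
    (T : M [⋀^Fin (k + 1)]→ₗ[R] N) {v : M} (hv : T.curryLeft v = 0) (u : Fin (k + 1) → M)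
    (i : Fin (k + 1)) : T (Function.update u i v) = 0 := by
  have hfirst : ∀ w : Fin (k + 1) → M, w 0 = v → T w = 0 := fun w hw => by
    rw [← Fin.cons_self_tail w, hw, ← Matrix.vecCons, ← curryLeft_apply_apply, hv]
    rfl
  by_cases hi : i = 0
  · exact hfirst _ (by simp [hi])
  · rw [← neg_eq_zero, ← T.map_swap _ (Ne.symm hi)]
    exact hfirst _ (by simp)

lemma AlternatingMap.card_filter_ne_zero_eq_sum_curryLeft {R M N : Type*} [CommSemiring R]
    [AddCommMonoid M] [Module R M] [Fintype M] [AddCommMonoid N] [Module R N] [DecidableEq N]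
    {k : ℕ} (T : M [⋀^Fin (k + 1)]→ₗ[R] N) :
    #{u | T u ≠ 0} = ∑ v with T.curryLeft v ≠ 0, #{w | T.curryLeft v w ≠ 0} := by
  rw [sum_filter_of_ne fun v _ hv h => by simp [h] at hv, card_filter,
    ← (Fin.consEquiv fun _ => M).sum_comp, Fintype.sum_prod_type]
  refine sum_congr rfl fun v _ => ?_
  rw [card_filter]
  rfl

section AlternatingCount

open Module

variable {F V : Type*} [Field F] [AddCommGroup V] [Module F V]

/-- `T` is nonzero on some linearly independent `u`, and no nonzero vector of `span u` lies in the
kernel of `curryLeft`. -/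
lemma AlternatingMap.finrank_ker_curryLeft_add_le [FiniteDimensional F V] {k : ℕ}
    (T : V [⋀^Fin (k + 1)]→ₗ[F] F) (hT : T ≠ 0) :
    finrank F (LinearMap.ker T.curryLeft) + (k + 1) ≤ finrank F V := by
  obtain ⟨u, hu⟩ := DFunLike.ne_iff.1 hT
  have hli : LinearIndependent F u := by
    by_contra h
    exact hu (T.map_linearDependent u h)
  have hdisj : Submodule.span F (Set.range u) ⊓ LinearMap.ker T.curryLeft = ⊥ := by
    refine eq_bot_iff.2 fun w ⟨hwW, hwK⟩ => ?_
    obtain ⟨c, rfl⟩ := (Submodule.mem_span_range_iff_exists_fun F).1 hwW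
    have hc : ∀ i, c i = 0 := fun i => by
      have hupd : T (Function.update u i (∑ j, c j • u j)) = c i • T u := by
        rw [← T.coe_multilinearMap, ← MultilinearMap.toLinearMap_apply, map_sum,
          sum_eq_single i (fun j _ hji => ?_) (by simp)]
        · simp
        · rw [map_smul, MultilinearMap.toLinearMap_apply, AlternatingMap.coe_multilinearMap,
            T.map_eq_zero_of_eq _ (i := i) (j := j) (by simp [Function.update_of_ne hji])
              (Ne.symm hji), smul_zero]
      rw [T.map_update_eq_zero_of_curryLeft_eq_zero hwK] at hupd
      exact (smul_eq_zero.1 hupd.symm).resolve_right hu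
    simp [hc]
  have hdim := Submodule.finrank_sup_add_finrank_inf_eq (Submodule.span F (Set.range u))
    (LinearMap.ker T.curryLeft)
  rw [hdisj, finrank_bot, finrank_span_eq_card hli, Fintype.card_fin] at hdim
  have := Submodule.finrank_le (Submodule.span F (Set.range u) ⊔ LinearMap.ker T.curryLeft)
  omega

variable [Fintype F] [Fintype V]

lemma LinearMap.card_filter_ne_zero {W : Type*} [AddCommGroup W] [Module F W] [DecidableEq W]
    (φ : V →ₗ[F] W) :
    #{v | φ v ≠ 0} =
      Fintype.card F ^ finrank F V - Fintype.card F ^ finrank F (LinearMap.ker φ) := by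
  have hker : #{v | φ v = 0} = Fintype.card F ^ finrank F (LinearMap.ker φ) := by
    rw [← Fintype.card_subtype, ← Nat.card_eq_fintype_card,
      ← Nat.card_eq_fintype_card (α := F), ← Module.natCard_eq_pow_finrank]
    rfl
  have hsplit := card_filter_add_card_filter_not (s := univ) (p := fun v => φ v = 0)
  rw [card_univ, Module.card_eq_pow_finrank (K := F)] at hsplit
  simp only [ne_eq]
  omega

variable [DecidableEq F]

theorem AlternatingMap.prod_le_card_filter_ne_zero {k : ℕ} (T : V [⋀^Fin k]→ₗ[F] F)
    (hT : T ≠ 0) :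
    ∏ i ∈ Icc 1 k, (Fintype.card F ^ finrank F V - Fintype.card F ^ (finrank F V - i)) ≤
      #{u | T u ≠ 0} := by
  induction k with
  | zero =>
    obtain ⟨u, hu⟩ := DFunLike.ne_iff.1 hT
    simpa using card_pos.2 ⟨u, mem_filter.2 ⟨mem_univ _, hu⟩⟩
  | succ k ih =>
    have hK := T.finrank_ker_curryLeft_add_le hT
    rw [prod_Icc_succ_top (by omega), T.card_filter_ne_zero_eq_sum_curryLeft, mul_comm]
    refine le_trans ?_ (card_nsmul_le_sum _ _ _ fun v hv => ih _ (mem_filter.1 hv).2)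
    rw [smul_eq_mul, LinearMap.card_filter_ne_zero]
    gcongr
    · exact Fintype.card_pos
    · omega

theorem AlternatingMap.card_filter_ne_zero_le {k : ℕ} (T : V [⋀^Fin (k + 1)]→ₗ[F] F) :
    #{u | T u ≠ 0} ≤ (Fintype.card F ^ finrank F V - Fintype.card F ^ (finrank F V - 1)) *
      (Fintype.card F ^ finrank F V - 1) ^ k := by
  induction k with
  | zero =>
    rw [T.card_filter_ne_zero_eq_sum_curryLeft]
    -- a `1`-form is a linear functional `φ`, whose kernel has codimension at most one
    let φ := (constLinearEquivOfIsEmpty (M'' := V)).symm.toLinearMap ∘ₗ T.curryLeft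
    have hφ : finrank F V - 1 ≤ finrank F (LinearMap.ker φ) := by
      have := φ.finrank_range_add_finrank_ker
      have := Submodule.finrank_le (LinearMap.range φ)
      rw [finrank_self] at this
      omega
    calc _ ≤ #{v | T.curryLeft v ≠ 0} • 1 := sum_le_card_nsmul _ _ _ fun v _ =>
          (card_filter_le _ _).trans (by simp)
      _ = #{v | φ v ≠ 0} := by
          simp only [φ, LinearMap.comp_apply, LinearEquiv.coe_coe, LinearEquiv.map_ne_zero_iff,
            smul_eq_mul, mul_one]
      _ ≤ _ := by
          rw [LinearMap.card_filter_ne_zero, pow_zero, mul_one]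
          gcongr
          exact Fintype.card_pos
  | succ k ih =>
    rw [T.card_filter_ne_zero_eq_sum_curryLeft]
    refine (sum_le_card_nsmul _ _ _ fun v _ => ih _).trans ?_
    rw [smul_eq_mul, LinearMap.card_filter_ne_zero]
    have hone : 1 ≤ Fintype.card F ^ finrank F (LinearMap.ker T.curryLeft) :=
      Nat.one_le_pow _ _ Fintype.card_pos
    exact (Nat.mul_le_mul_right _ (Nat.sub_le_sub_left hone _)).trans_eq (by ring)

end AlternatingCount

lemma dt_eq {n k : ℕ} {f : (Fin n → ZMod 2) → ZMod 2} (hf : degree n f ≤ k) :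
    dt n k f = #{u | testSumForm hf u ≠ 0} / (2 ^ n) ^ k := by
  have hindep : ∀ p : (Fin n → ZMod 2) × (Fin k → Fin n → ZMod 2),
      testSum n k f p.1 p.2 ≠ 0 ↔ testSumForm hf p.2 ≠ 0 := fun p => by
    rw [testSumForm_apply, testSum_eq_testSum_zero hf]
  rw [dt, filter_congr fun p _ => hindep p, ← univ_product_univ,
    filter_product_right (fun u => testSumForm hf u ≠ 0), card_product, card_univ,
    Fintype.card_fun, ZMod.card, Fintype.card_fin]
  push_cast
  rw [add_mul, one_mul, pow_add, pow_mul', mul_comm (((2 : ℝ) ^ n) ^ k),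
    mul_div_mul_left _ _ (by positivity)]

lemma cast_pow_sub_pow {q n i : ℕ} (hq : q ≠ 0) (hi : i ≤ n) :
    ((q ^ n - q ^ (n - i) : ℕ) : ℝ) = q ^ n * (1 - 1 / q ^ i) := by
  rw [Nat.cast_sub (Nat.pow_le_pow_right (Nat.pos_of_ne_zero hq) (Nat.sub_le n i))]
  have hqi : (q : ℝ) ^ (n - i) * q ^ i = q ^ n := by rw [← pow_add, Nat.sub_add_cancel hi]
  field_simp
  push_cast
  linarith

lemma cast_prod_Icc_pow_sub_pow {q n k : ℕ} (hq : q ≠ 0) (hk : k ≤ n) :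
    ((∏ i ∈ Icc 1 k, (q ^ n - q ^ (n - i)) : ℕ) : ℝ) =
      (q ^ n) ^ k * ∏ i ∈ Icc 1 k, (1 - 1 / q ^ i : ℝ) := by
  rw [Nat.cast_prod, prod_congr rfl fun i hi => cast_pow_sub_pow hq ((mem_Icc.1 hi).2.trans hk),
    prod_mul_distrib, prod_const, Nat.card_Icc, add_tsub_cancel_right]

lemma cast_pow_sub_pow_mul_pow_sub_one_pow {q n : ℕ} (m : ℕ) (hq : q ≠ 0) (hn : 1 ≤ n) :
    (((q ^ n - q ^ (n - 1)) * (q ^ n - 1) ^ m : ℕ) : ℝ) =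
      (q ^ n) ^ (m + 1) * ((1 - 1 / q) * (1 - 1 / q ^ n) ^ m) := by
  have hsub_one := cast_pow_sub_pow hq (le_refl n)
  rw [Nat.sub_self, pow_zero] at hsub_one
  rw [Nat.cast_mul, Nat.cast_pow, cast_pow_sub_pow hq hn, hsub_one, pow_one, mul_pow]
  ring

theorem dt_bounds (n k : ℕ) (hk : 1 ≤ k) (f : (Fin n → ZMod 2) → ZMod 2)
    (hdeg : degree n f = k) :
    (∏ i ∈ Icc 1 k, (1 - 1 / 2 ^ i : ℝ)) ≤ dt n k f ∧
    dt n k f ≤ (1 / 2) * (1 - 1 / 2 ^ n) ^ (k - 1) := by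
  obtain ⟨a, ha, hwt⟩ := exists_anf_ne_zero_wt_eq_degree (f := f) (by omega)
  have hkn : k ≤ n := hdeg ▸ hwt ▸ wt_le n a
  obtain ⟨u, hu⟩ := exists_testSum_eq_anf f (hwt.trans hdeg)
  have hT : testSumForm hdeg.le ≠ 0 := DFunLike.ne_iff.2 ⟨u, by rwa [testSumForm_apply, hu]⟩
  have lower := (testSumForm hdeg.le).prod_le_card_filter_ne_zero hT
  obtain ⟨m, rfl⟩ : ∃ m, k = m + 1 := ⟨k - 1, by omega⟩
  have upper := (testSumForm hdeg.le).card_filter_ne_zero_le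
  simp only [ZMod.card, Module.finrank_fin_fun] at lower upper
  have hlower := cast_prod_Icc_pow_sub_pow two_ne_zero hkn
  have hupper := cast_pow_sub_pow_mul_pow_sub_one_pow (n := n) m two_ne_zero (by omega)
  simp only [Nat.cast_ofNat] at hlower hupper
  rw [dt_eq hdeg.le, add_tsub_cancel_right]
  constructor
  · rw [le_div_iff₀ (by positivity), mul_comm, ← hlower]
    exact_mod_cast lower
  · rw [div_le_iff₀ (by positivity)]
    calc _ ≤ (((2 ^ n - 2 ^ (n - 1)) * (2 ^ n - 1) ^ m : ℕ) : ℝ) := by exact_mod_cast upper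
      _ = _ := by rw [hupper]; ring
end
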